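/- arXiv:2605.19429 — 7 statements merged into one kernel-verified Lean document; each statement's English description precedes it below -/
import Mathlib

section
/- Fix n ≥ 2 and 0 ≤ k ≤ n-2. For a permutation π of {1,...,n}, let j be the position of the maximum value n, and define the statistic st(π) to be the number of indices i < j such that π_i is greater than every entry π_ℓ with ℓ > j. Then the number of permutations π of {1,...,n} with st(π) = k equals n!/((k+1)(k+2)). Moreover, the number of permutations with st(π) = n-1 (i.e., n in the last position) equals (n-1)!. -/
/-- For a permutation `π` of `Fin n` (one-line notation: `π i` is the entry in
position `i`), with `j` the position of the maximum value, `st25` counts the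
indices `i < j` such that `π i` is greater than every entry `π ℓ` with `ℓ > j`. -/
def st25 {n : ℕ} (hn : 0 < n) (π : Equiv.Perm (Fin n)) : ℕ :=
  (Finset.univ.filter fun i : Fin n =>
    i < π.symm ⟨n - 1, by omega⟩ ∧
      ∀ ℓ : Fin n, π.symm ⟨n - 1, by omega⟩ < ℓ → π ℓ < π i).card

/-!
Entries are the values `0, …, n - 1` of `Fin n`; write `σ = π⁻¹`, so that `σ v` is the position
of the value `v`. If `m` is the largest entry to the right of the maximum `n - 1`, the entries
counted by `st25` are exactly the values strictly between `m` and `n - 1`, so `st25 π = k` iff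
`m = n - 2 - k`, i.e. iff among the `k + 2` largest values, `n - 2 - k` sits furthest right and
`n - 1` second furthest. Right multiplication by a transposition of two of these values shows
that each of the `k + 2` values is equally often furthest right, and then each of the remaining
`k + 1` equally often second furthest, whence the count `n! / ((k + 1) (k + 2))`. Similarly
`st25 π = n - 1` iff nothing lies to the right of the maximum, which happens `n! / n` times.
-/

open Finset Equiv Nat

theorem Finset.forall_mem_swap_apply_iff {α : Type*} [DecidableEq α] {s : Finset α} {x y : α}
    (hx : x ∈ s) (hy : y ∈ s) {p : α → Prop} : (∀ d ∈ s, p (swap x y d)) ↔ ∀ d ∈ s, p d := by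
  have hmaps := (swap_bijOn_self (s := (s : Set α)) (iff_of_true hx hy)).mapsTo
  refine ⟨fun h d hd => ?_, fun h d hd => h _ (hmaps hd)⟩
  simpa using h _ (hmaps hd)

section Argmax

variable {α : Type*} [Fintype α] [DecidableEq α] [LinearOrder α]

theorem Equiv.Perm.card_filter_forall_le_mul_card (P : Perm α → Prop) [DecidablePred P]
    (S : Finset α) {a : α} (ha : a ∈ S) (hP : ∀ σ, ∀ c ∈ S, P (σ * swap a c) ↔ P σ) :
    #{σ | P σ ∧ ∀ c ∈ S, σ c ≤ σ a} * #S = #{σ | P σ} := by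
  have hpart : ({σ | P σ} : Finset (Perm α)) =
      S.biUnion fun c => {σ | P σ ∧ ∀ d ∈ S, σ d ≤ σ c} := by
    ext σ
    simp only [mem_filter, mem_univ, true_and, mem_biUnion]
    refine ⟨fun h => ?_, fun ⟨_, _, h, _⟩ => h⟩
    obtain ⟨c, hc, hmax⟩ := S.exists_max_image σ ⟨a, ha⟩
    exact ⟨c, hc, h, hmax⟩
  have hfiber : ∀ c ∈ S,
      #{σ | P σ ∧ ∀ d ∈ S, σ d ≤ σ c} = #{σ | P σ ∧ ∀ d ∈ S, σ d ≤ σ a} := by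
    intro c hc
    refine card_equiv (Equiv.mulRight (swap a c)) fun σ => ?_
    simp only [mem_filter, mem_univ, true_and, coe_mulRight, Perm.mul_apply, hP σ c hc,
      swap_apply_left, forall_mem_swap_apply_iff ha hc (p := fun d => σ d ≤ σ c)]
  rw [hpart, card_biUnion fun c hc c' hc' hne => disjoint_filter.mpr
    fun (σ : Perm α) _ h h' => hne (σ.injective (le_antisymm (h'.2 c hc) (h.2 c' hc'))),
    sum_congr rfl hfiber, sum_const, smul_eq_mul, mul_comm]

theorem Equiv.Perm.card_filter_forall_le_forall_le_mul (S : Finset α) {a b : α} (ha : a ∈ S)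
    (hb : b ∈ S) (hab : a ≠ b) :
    #{σ : Perm α | (∀ c ∈ S, σ c ≤ σ a) ∧ ∀ c ∈ S.erase a, σ c ≤ σ b} * (#S * (#S - 1)) =
      (Fintype.card α)! := by
  have hb' : b ∈ S.erase a := mem_erase.mpr ⟨hab.symm, hb⟩
  have hsecond := card_filter_forall_le_mul_card (fun σ : Perm α => ∀ c ∈ S, σ c ≤ σ a)
    (S.erase a) hb' fun σ c hc => by
      have hca : c ≠ a := (mem_erase.mp hc).1
      simp only [Perm.mul_apply, swap_apply_of_ne_of_ne hab hca.symm,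
        forall_mem_swap_apply_iff hb (mem_of_mem_erase hc) (p := fun d => σ d ≤ σ a)]
  have hfirst := card_filter_forall_le_mul_card (fun _ : Perm α => True) S ha (by simp)
  simp only [true_and, filter_true, Finset.card_univ, Fintype.card_perm] at hfirst
  rw [card_erase_of_mem ha] at hsecond
  rw [← hfirst, ← hsecond, mul_comm #S, mul_assoc]

end Argmax

theorem Equiv.Perm.card_filter_symm {α : Type*} [Fintype α] [DecidableEq α] (p : Perm α → Prop)
    [DecidablePred p] : #{π : Perm α | p π.symm} = #{σ : Perm α | p σ} :=
  card_equiv (Equiv.inv (Perm α)) fun _ => by simp [Perm.inv_def]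

theorem isGreatest_setOf_lt_iff {α β : Type*} [LinearOrder α] [LocallyFiniteOrder α]
    [LinearOrder β] {f : α → β} (hf : Function.Injective f) {m t : α} (hmt : m < t)
    (ht : IsTop t) :
    IsGreatest {w | f t < f w} m ↔
      (∀ c ∈ Icc m t, f c ≤ f m) ∧ ∀ c ∈ (Icc m t).erase m, f c ≤ f t := by
  constructor
  · rintro ⟨hm, hmax⟩
    have hright : ∀ c, m < c → f c ≤ f t := fun c hmc => not_lt.mp fun hc => (hmax hc).not_gt hmc
    refine ⟨fun c hc => ?_, fun c hc => ?_⟩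
    · rcases (mem_Icc.mp hc).1.eq_or_lt with rfl | hmc
      · exact le_rfl
      · exact (hright c hmc).trans hm.le
    · obtain ⟨hcm, hc⟩ := mem_erase.mp hc
      exact hright c (lt_of_le_of_ne (mem_Icc.mp hc).1 (Ne.symm hcm))
  · rintro ⟨hleft, hright⟩
    refine ⟨lt_of_le_of_ne (hleft t (mem_Icc.mpr ⟨hmt.le, le_rfl⟩)) (hf.ne hmt.ne'), fun w hw => ?_⟩
    by_contra! hmw
    exact (hright w (mem_erase.mpr ⟨hmw.ne', mem_Icc.mpr ⟨hmw.le, ht w⟩⟩)).not_gt hw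

theorem st25_eq_card_filter {n : ℕ} (hn : 0 < n) (π : Perm (Fin n)) :
    st25 hn π = #{v | π.symm v < π.symm ⟨n - 1, by omega⟩ ∧
      ∀ w, π.symm ⟨n - 1, by omega⟩ < π.symm w → w < v} := by
  refine card_equiv π fun i => ?_
  simp only [mem_filter, mem_univ, true_and, symm_apply_apply]
  refine and_congr_right fun _ => ?_
  rw [π.forall_congr_left]
  simp only [apply_symm_apply]

theorem val_lt_sub_one_of_isGreatest {n : ℕ} (hn : 0 < n) (π : Perm (Fin n)) {m : Fin n}
    (hm : IsGreatest {w | π.symm ⟨n - 1, by omega⟩ < π.symm w} m) : (m : ℕ) < n - 1 := by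
  have hmt : m ≠ ⟨n - 1, by omega⟩ := fun h => (h ▸ hm.1 : _ < π.symm _).false
  have := Fin.val_ne_of_ne hmt
  simp only at this
  omega

theorem st25_of_isGreatest {n : ℕ} (hn : 0 < n) (π : Perm (Fin n)) {m : Fin n}
    (hm : IsGreatest {w | π.symm ⟨n - 1, by omega⟩ < π.symm w} m) : st25 hn π = n - 2 - m := by
  set t : Fin n := ⟨n - 1, by omega⟩
  have hleft : ∀ v, m < v → v ≠ t → π.symm v < π.symm t := fun v hmv hvt =>
    lt_of_le_of_ne (not_lt.mp fun hv => (hm.2 hv).not_gt hmv) (π.symm.injective.ne hvt)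
  have hfilter : ({v | π.symm v < π.symm t ∧ ∀ w, π.symm t < π.symm w → w < v} : Finset (Fin n))
      = Ioo m t := by
    ext v
    simp only [mem_filter, mem_univ, true_and, mem_Ioo]
    constructor
    · rintro ⟨hv, hgt⟩
      refine ⟨hgt m hm.1, lt_of_le_of_ne (Fin.le_def.mpr (Nat.le_sub_one_of_lt v.isLt)) ?_⟩
      rintro rfl
      exact hv.false
    · rintro ⟨hmv, hvt⟩
      exact ⟨hleft v hmv hvt.ne, fun w hw => (hm.2 hw).trans_lt hmv⟩
  rw [st25_eq_card_filter, hfilter, Fin.card_Ioo]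
  have := val_lt_sub_one_of_isGreatest hn π hm
  simp only [t]
  omega

theorem st25_of_forall_le {n : ℕ} (hn : 0 < n) (π : Perm (Fin n))
    (h : ∀ w, π.symm w ≤ π.symm ⟨n - 1, by omega⟩) : st25 hn π = n - 1 := by
  set t : Fin n := ⟨n - 1, by omega⟩
  have hfilter : ({v | π.symm v < π.symm t ∧ ∀ w, π.symm t < π.symm w → w < v} : Finset (Fin n))
      = univ.erase t := by
    ext v
    simp only [mem_filter, mem_univ, true_and, mem_erase, and_true]
    refine ⟨fun hv hvt => (hvt ▸ hv.1).false, fun hvt => ⟨?_, fun w hw => ((h w).not_gt hw).elim⟩⟩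
    exact lt_of_le_of_ne (h v) (π.symm.injective.ne hvt)
  rw [st25_eq_card_filter, hfilter, card_erase_of_mem (mem_univ t), Finset.card_univ,
    Fintype.card_fin]

theorem forall_le_or_exists_isGreatest {α β : Type*} [Fintype α] [LinearOrder α]
    [LinearOrder β] (f : α → β) (t : α) :
    (∀ w, f w ≤ f t) ∨ ∃ m, IsGreatest {w | f t < f w} m := by
  classical
  refine or_iff_not_imp_left.mpr fun h => ?_
  obtain ⟨w, hw⟩ := not_forall.mp h
  have hne : ({w | f t < f w} : Finset α).Nonempty := ⟨w, by simpa using hw⟩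
  exact ⟨_, by simpa using isGreatest_max' _ hne⟩

theorem st25_eq_iff_isGreatest {n k : ℕ} (hn : 0 < n) (hk : k + 2 ≤ n) (π : Perm (Fin n)) :
    st25 hn π = k ↔
      IsGreatest {w | π.symm ⟨n - 1, by omega⟩ < π.symm w} ⟨n - 2 - k, by omega⟩ := by
  refine ⟨fun hst => ?_, fun hm => by rw [st25_of_isGreatest hn π hm]; simp only; omega⟩
  rcases forall_le_or_exists_isGreatest π.symm ⟨n - 1, by omega⟩ with h | ⟨m, hm⟩
  · rw [st25_of_forall_le hn π h] at hst
    omega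
  · rw [st25_of_isGreatest hn π hm] at hst
    have := val_lt_sub_one_of_isGreatest hn π hm
    have hmk : m = ⟨n - 2 - k, by omega⟩ := Fin.ext (by simp only; omega)
    rwa [← hmk]

theorem st25_eq_sub_one_iff {n : ℕ} (hn : 0 < n) (π : Perm (Fin n)) :
    st25 hn π = n - 1 ↔ ∀ w, π.symm w ≤ π.symm ⟨n - 1, by omega⟩ := by
  refine ⟨fun hst => ?_, st25_of_forall_le hn π⟩
  rcases forall_le_or_exists_isGreatest π.symm ⟨n - 1, by omega⟩ with h | ⟨m, hm⟩
  · exact h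
  · rw [st25_of_isGreatest hn π hm] at hst
    have := val_lt_sub_one_of_isGreatest hn π hm
    omega

theorem card_filter_st25_eq_mul {n k : ℕ} (hn : 0 < n) (hk : k + 2 ≤ n) :
    #{π : Perm (Fin n) | st25 hn π = k} * ((k + 1) * (k + 2)) = n ! := by
  set m : Fin n := ⟨n - 2 - k, by omega⟩
  set t : Fin n := ⟨n - 1, by omega⟩
  have hmt : m < t := Fin.mk_lt_mk.mpr (by omega)
  have ht : IsTop t := fun w => Fin.le_def.mpr (Nat.le_sub_one_of_lt w.isLt)
  have hS : #(Icc m t) = k + 2 := by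
    rw [Fin.card_Icc]
    simp only [m, t]
    omega
  have hcard : #{π : Perm (Fin n) | st25 hn π = k} =
      #{σ : Perm (Fin n) | (∀ c ∈ Icc m t, σ c ≤ σ m) ∧ ∀ c ∈ (Icc m t).erase m, σ c ≤ σ t} := by
    rw [← Perm.card_filter_symm fun σ : Perm (Fin n) =>
      (∀ c ∈ Icc m t, σ c ≤ σ m) ∧ ∀ c ∈ (Icc m t).erase m, σ c ≤ σ t]
    simp only [st25_eq_iff_isGreatest hn hk,
      isGreatest_setOf_lt_iff (Equiv.injective _) hmt ht, m, t]
  have hcount := Perm.card_filter_forall_le_forall_le_mul (Icc m t)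
    (left_mem_Icc.mpr hmt.le) (right_mem_Icc.mpr hmt.le) hmt.ne
  rw [hS, Fintype.card_fin, show k + 2 - 1 = k + 1 by omega, mul_comm (k + 2)] at hcount
  rw [hcard]
  -- the two sides differ only in their `Decidable (σ c ≤ σ m)` instances
  convert hcount using 4

theorem card_filter_st25_eq_sub_one {n : ℕ} (hn : 0 < n) :
    #{π : Perm (Fin n) | st25 hn π = n - 1} = (n - 1)! := by
  set t : Fin n := ⟨n - 1, by omega⟩
  have hcount := Perm.card_filter_forall_le_mul_card (fun _ => True) univ (mem_univ t) (by simp)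
  simp only [true_and, mem_univ, forall_const, filter_true, Finset.card_univ, Fintype.card_perm,
    Fintype.card_fin] at hcount
  calc #{π : Perm (Fin n) | st25 hn π = n - 1}
      = #{π : Perm (Fin n) | ∀ w, π.symm w ≤ π.symm t} := by simp only [st25_eq_sub_one_iff, t]
    _ = #{σ : Perm (Fin n) | ∀ w, σ w ≤ σ t} := Perm.card_filter_symm fun σ => ∀ w, σ w ≤ σ t
    _ = (n - 1)! := Nat.eq_of_mul_eq_mul_right hn
        (by rw [hcount, mul_comm, Nat.mul_factorial_pred hn.ne'])

/-- For `n ≥ 2` and `k ≤ n-2`, the number of permutations of `{1,…,n}` with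
`st = k` equals `n!/((k+1)(k+2))`, and the number with `st = n-1` equals `(n-1)!`. -/
theorem class25_distribution (n k : ℕ) (hn : 2 ≤ n) :
    (k ≤ n - 2 →
      ((Finset.univ.filter fun π : Equiv.Perm (Fin n) =>
          st25 (by omega) π = k).card : ℚ) =
        (n.factorial : ℚ) / ((k + 1) * (k + 2))) ∧
    (Finset.univ.filter fun π : Equiv.Perm (Fin n) =>
        st25 (by omega : 0 < n) π = n - 1).card = (n - 1).factorial := by
  refine ⟨fun hk => ?_, card_filter_st25_eq_sub_one _⟩
  rw [eq_div_iff (by positivity)]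
  exact_mod_cast card_filter_st25_eq_mul (by omega) (by omega : k + 2 ≤ n)
end

section
/- For every n ≥ 1, the identity ∑_{i=0}^{n-2} i!·(n-i-2)!·C(n-1, i+1) = (n-1)! · ∑_{k=1}^{n-1} 1/k holds (as an identity of rational numbers; for n = 1 both sides are empty sums equal to 0). -/
open Nat Finset

theorem factorial_mul_factorial_mul_choose_succ {K : Type*} [Field K] [CharZero K]
    {m i : ℕ} (h : i < m) :
    (i ! : K) * ((m - (i + 1))! : K) * (m.choose (i + 1) : K) = (m ! : K) / (i + 1) := by
  have hchoose : (m.choose (i + 1) : K) * (i + 1)! * (m - (i + 1))! = m ! := by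
    exact_mod_cast choose_mul_factorial_mul_factorial h
  rw [eq_div_iff (cast_add_one_ne_zero i), ← hchoose, factorial_succ]
  push_cast
  ring

theorem sum_factorial_div_succ_eq_factorial_mul_harmonic (m : ℕ) :
    ∑ i ∈ range m, (m ! : ℚ) / (i + 1) = m ! * ∑ k ∈ Icc 1 m, (1 : ℚ) / k := by
  calc ∑ i ∈ range m, (m ! : ℚ) / (i + 1) = m ! * harmonic m := by
        simp [harmonic, mul_sum, div_eq_mul_inv]
    _ = m ! * ∑ k ∈ Icc 1 m, (1 : ℚ) / k := by simp [harmonic_eq_sum_Icc]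

theorem factorial_choose_sum_eq_harmonic_general (n : ℕ) :
    ∑ i ∈ Finset.range (n - 1),
        ((i.factorial : ℚ) * ((n - i - 2).factorial : ℚ) * ((n - 1).choose (i + 1) : ℚ)) =
      ((n - 1).factorial : ℚ) * ∑ k ∈ Finset.Icc 1 (n - 1), (1 : ℚ) / (k : ℚ) := by
  rw [← sum_factorial_div_succ_eq_factorial_mul_harmonic]
  refine sum_congr rfl fun i hi => ?_
  rw [show n - i - 2 = n - 1 - (i + 1) by omega]
  exact factorial_mul_factorial_mul_choose_succ (mem_range.mp hi)

/-- For every `n ≥ 1`,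
`∑_{i=0}^{n-2} i!·(n-i-2)!·C(n-1, i+1) = (n-1)! · ∑_{k=1}^{n-1} 1/k`
as an identity of rational numbers. -/
theorem factorial_choose_sum_eq_harmonic (n : ℕ) (hn : 1 ≤ n) :
    ∑ i ∈ Finset.range (n - 1),
        ((i.factorial : ℚ) * ((n - i - 2).factorial : ℚ) * ((n - 1).choose (i + 1) : ℚ)) =
      ((n - 1).factorial : ℚ) * ∑ k ∈ Finset.Icc 1 (n - 1), (1 : ℚ) / (k : ℚ) :=
  factorial_choose_sum_eq_harmonic_general n
end

section
/- For n ≥ 1, the number of permutations π of {1,...,n} such that either π_1 = n, or there exists a value v with π_1 < v < n that appears at a position after the position of n, equals (n-1)!·(n - H_{n-1}), where H_{n-1} = ∑_{k=1}^{n-1} 1/k is the (n-1)-st harmonic number. -/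
/-!
Work with values in `Fin n` and fix the first entry `a` below the maximum. Left multiplication
by the transposition of two values above `a` keeps the first entry and exchanges which of the two
stands rightmost among the values above `a`, so each of these `n - 1 - a` values is rightmost
equally often, in `(n-1)!/(n-1-a)` permutations. A permutation is not counted exactly when its
first entry is not the maximum and the maximum is rightmost among the values above the first
entry; summing over `a` gives `(n-1)! H_{n-1}` such permutations.
-/

open Finset Equiv
open scoped Nat

namespace Equiv.Perm

section Rightmost

variable {α : Type*} [LinearOrder α]

/-- `π.symm v` is the position of the value `v` in the one-line notation of `π`. -/
def IsRightmostIn (π : Perm α) (S : Finset α) (s : α) : Prop :=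
  ∀ v ∈ S, π.symm v ≤ π.symm s

instance (π : Perm α) (S : Finset α) (s : α) : Decidable (π.IsRightmostIn S s) :=
  inferInstanceAs (Decidable (∀ v ∈ S, π.symm v ≤ π.symm s))

theorem IsRightmostIn.eq {π : Perm α} {S : Finset α} {s t : α} (hs : s ∈ S) (ht : t ∈ S)
    (hπs : π.IsRightmostIn S s) (hπt : π.IsRightmostIn S t) : s = t :=
  π.symm.injective (le_antisymm (hπt s hs) (hπs t ht))

theorem IsRightmostIn.swap_mul {π : Perm α} {S : Finset α} {s t : α} (hs : s ∈ S)
    (ht : t ∈ S) (h : π.IsRightmostIn S s) : (swap s t * π).IsRightmostIn S t := by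
  intro v hv
  have hsymm : ∀ w, (swap s t * π).symm w = π.symm (swap s t w) := fun w => by
    simp [Perm.mul_def]
  rw [hsymm, hsymm, swap_apply_right]
  refine h _ ?_
  rw [swap_apply_def]
  split_ifs <;> assumption

theorem card_mul_card_filter_isRightmostIn [Fintype α] {P : Finset (Perm α)} {S : Finset α}
    (hP : ∀ π ∈ P, ∀ s ∈ S, ∀ t ∈ S, swap s t * π ∈ P) {s : α} (hs : s ∈ S) :
    #S * #{π ∈ P | π.IsRightmostIn S s} = #P := by
  have hcard (t : α) (ht : t ∈ S) :
      #{π ∈ P | π.IsRightmostIn S t} = #{π ∈ P | π.IsRightmostIn S s} := by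
    refine card_nbij' (swap t s * ·) (swap s t * ·) ?_ ?_ ?_ ?_
    · intro π hπ
      simp only [coe_filter, Set.mem_ofPred_eq] at hπ ⊢
      exact ⟨hP π hπ.1 t ht s hs, hπ.2.swap_mul ht hs⟩
    · intro π hπ
      simp only [coe_filter, Set.mem_ofPred_eq] at hπ ⊢
      exact ⟨hP π hπ.1 s hs t ht, hπ.2.swap_mul hs ht⟩
    · intro π _
      simp only [swap_comm t s, swap_mul_self_mul]
    · intro π _
      simp only [swap_comm t s, swap_mul_self_mul]
  have hunion : P = S.biUnion fun t => {π ∈ P | π.IsRightmostIn S t} := by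
    ext π
    simp only [mem_biUnion, mem_filter]
    constructor
    · intro hπ
      obtain ⟨t, ht, hmax⟩ := S.exists_max_image π.symm ⟨s, hs⟩
      exact ⟨t, ht, hπ, hmax⟩
    · rintro ⟨_, _, hπ, _⟩
      exact hπ
  have hdisj : (S : Set α).PairwiseDisjoint fun t => {π ∈ P | π.IsRightmostIn S t} :=
    fun t ht u hu htu => disjoint_filter.2 fun π _ hπt hπu => htu (hπt.eq ht hu hπu)
  calc #S * #{π ∈ P | π.IsRightmostIn S s}
      = ∑ t ∈ S, #{π ∈ P | π.IsRightmostIn S t} := (sum_const_nat hcard).symm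
    _ = #P := by rw [← card_biUnion hdisj, ← hunion]

end Rightmost

theorem decomposeFin_fst {m : ℕ} (π : Perm (Fin (m + 1))) : (decomposeFin π).1 = π 0 := by
  simpa using (decomposeFin_symm_apply_zero (decomposeFin π).1 (decomposeFin π).2).symm

theorem card_filter_apply_zero_eq {m : ℕ} (a : Fin (m + 1)) :
    #{π : Perm (Fin (m + 1)) | π 0 = a} = m ! := by
  rw [← Fintype.card_subtype,
    Fintype.card_congr (decomposeFin.subtypeEquiv (q := fun x => x.1 = a) fun π => by
      rw [decomposeFin_fst]),
    Fintype.card_congr (prodSubtypeFstEquivSubtypeProd (p := (· = a))), Fintype.card_prod,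
    Fintype.card_unique, one_mul, Fintype.card_perm, Fintype.card_fin]

theorem card_mul_card_filter_apply_zero_isRightmostIn_Ioi_last {m : ℕ} (i : Fin m) :
    (m - i) * #{π : Perm (Fin (m + 1)) |
      π 0 = i.castSucc ∧ π.IsRightmostIn (Ioi i.castSucc) (Fin.last m)} = m ! := by
  set P : Finset (Perm (Fin (m + 1))) := {π | π 0 = i.castSucc}
  have hP : ∀ π ∈ P, ∀ s ∈ Ioi i.castSucc, ∀ t ∈ Ioi i.castSucc, swap s t * π ∈ P := by
    intro π hπ s hs t ht
    simp only [P, mem_filter_univ, mem_Ioi] at hπ hs ht ⊢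
    rw [Perm.mul_apply, hπ, swap_apply_of_ne_of_ne hs.ne ht.ne]
  have key := card_mul_card_filter_isRightmostIn hP (mem_Ioi.2 (Fin.castSucc_lt_last i))
  rwa [filter_filter, card_filter_apply_zero_eq, Fin.card_Ioi, Fin.val_castSucc,
    Nat.add_sub_cancel] at key

end Equiv.Perm

open Equiv.Perm

theorem isRightmostIn_Ioi_last_iff {m : ℕ} (π : Perm (Fin (m + 1))) (a : Fin (m + 1)) :
    a ≠ Fin.last m ∧ π.IsRightmostIn (Ioi a) (Fin.last m) ↔
      ¬(a = Fin.last m ∨ ∃ v, a < v ∧ v < Fin.last m ∧ π.symm (Fin.last m) < π.symm v) := by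
  simp only [IsRightmostIn, mem_Ioi, not_or, not_exists, not_and, not_lt]
  refine and_congr_right fun _ => forall_congr' fun v => ⟨fun h hav _ => h hav, fun h hav => ?_⟩
  rcases (Fin.le_last v).lt_or_eq with hv | rfl
  · exact h hav hv
  · exact le_rfl

theorem sum_fin_inv_sub_eq_harmonic (m : ℕ) :
    ∑ i : Fin m, ((m - i : ℕ) : ℚ)⁻¹ = harmonic m := by
  rw [Fin.sum_univ_eq_sum_range (fun i => ((m - i : ℕ) : ℚ)⁻¹), ← sum_range_reflect, harmonic]
  refine sum_congr rfl fun j hj => ?_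
  rw [mem_range] at hj
  congr 2
  omega

theorem card_filter_isRightmostIn_Ioi_apply_zero_last {m : ℕ} :
    (#{π : Perm (Fin (m + 1)) |
      π 0 ≠ Fin.last m ∧ π.IsRightmostIn (Ioi (π 0)) (Fin.last m)} : ℚ) = m ! * harmonic m := by
  set A : Finset (Perm (Fin (m + 1))) :=
    {π | π 0 ≠ Fin.last m ∧ π.IsRightmostIn (Ioi (π 0)) (Fin.last m)}
  have hlast : #{π ∈ A | π 0 = Fin.last m} = 0 := by
    rw [card_eq_zero, filter_eq_empty_iff]
    exact fun π hπ h => ((mem_filter_univ π).1 hπ).1 h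
  have hfiber (i : Fin m) : (#{π ∈ A | π 0 = i.castSucc} : ℚ) = m ! / (m - i : ℕ) := by
    have hA : {π ∈ A | π 0 = i.castSucc} = ({π |
        π 0 = i.castSucc ∧ π.IsRightmostIn (Ioi i.castSucc) (Fin.last m)} : Finset _) := by
      ext π
      simp only [A, mem_filter, mem_univ, true_and]
      grind [Fin.castSucc_lt_last]
    rw [eq_div_iff (Nat.cast_ne_zero.2 (by omega)), mul_comm, hA]
    exact_mod_cast card_mul_card_filter_apply_zero_isRightmostIn_Ioi_last i
  rw [card_eq_sum_card_fiberwise (f := (· 0)) (t := univ) (by simp), Fin.sum_univ_castSucc]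
  push_cast
  rw [hlast, Nat.cast_zero, add_zero, sum_congr rfl fun i _ => hfiber i,
    ← sum_fin_inv_sub_eq_harmonic, mul_sum]
  simp only [div_eq_mul_inv]

/-- For `n ≥ 1`, the number of permutations `π` of `{1,…,n}` such that either
the first entry is `n`, or there exists a value `v` with `π₁ < v < n` appearing
at a position after the position of `n`, equals `(n-1)!·(n - H_{n-1})`. Here
`π i` is the entry in position `i`, and `π.symm v` is the position of value `v`. -/
theorem class62_containment_count (n : ℕ) (hn : 1 ≤ n) :
    ((Finset.univ.filter fun π : Equiv.Perm (Fin n) =>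
        π ⟨0, by omega⟩ = ⟨n - 1, by omega⟩ ∨
          ∃ v : Fin n, π ⟨0, by omega⟩ < v ∧ v < ⟨n - 1, by omega⟩ ∧
            π.symm ⟨n - 1, by omega⟩ < π.symm v).card : ℚ) =
      ((n - 1).factorial : ℚ) * ((n : ℚ) - ∑ k ∈ Finset.Icc 1 (n - 1), (1 : ℚ) / (k : ℚ)) := by
  obtain ⟨m, rfl⟩ : ∃ m, n = m + 1 := ⟨n - 1, by omega⟩
  have hmk : (⟨m, by omega⟩ : Fin (m + 1)) = Fin.last m := rfl
  simp only [Fin.mk_zero, Nat.add_sub_cancel, hmk]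
  have hsplit := card_filter_add_card_filter_not (s := (univ : Finset (Perm (Fin (m + 1)))))
    fun π => π 0 = Fin.last m ∨ ∃ v, π 0 < v ∧ v < Fin.last m ∧ π.symm (Fin.last m) < π.symm v
  rw [filter_congr fun π _ => (isRightmostIn_Ioi_last_iff π (π 0)).symm, card_univ,
    Fintype.card_perm, Fintype.card_fin] at hsplit
  have hQ := congrArg (Nat.cast : ℕ → ℚ) hsplit
  rw [Nat.cast_add, card_filter_isRightmostIn_Ioi_apply_zero_last, Nat.factorial_succ,
    harmonic_eq_sum_Icc] at hQ
  push_cast at hQ ⊢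
  simp only [one_div]
  linear_combination hQ
end

section
/- Define a_n to be the number of permutations π of {1,...,n} having no index i such that π_i is simultaneously a left-to-right maximum and a right-to-left minimum of π, with a_0 = 1. Then for all n ≥ 1, n! = a_n + ∑_{i=0}^{n-1} a_i · (n-1-i)!. -/
/-- `a n` is the number of permutations of `{1,…,n}` having no position `i`
whose entry is both a left-to-right maximum and a right-to-left minimum
(so `a 0 = 1`). -/
def avoidCount (n : ℕ) : ℕ :=
  (Finset.univ.filter fun π : Equiv.Perm (Fin n) =>
    ¬ ∃ i : Fin n, (∀ j : Fin n, j < i → π j < π i) ∧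
      (∀ j : Fin n, i < j → π i < π j)).card


/-!
Sort the permutations of `Fin n` by their first strong fixed point `i` (a position that is both
a left-to-right maximum and a right-to-left minimum). Such a point is a genuine fixed point
splitting `σ` into a permutation of the first `i` positions, which has no strong fixed point, and
an arbitrary permutation of the last `n - 1 - i` positions; this gives `a_i (n - 1 - i)!`
permutations, and those without a strong fixed point are counted by `a_n`.
-/

open Finset Equiv

namespace Equiv.Perm

variable {n : ℕ}

def IsStrongFixedPoint (σ : Perm (Fin n)) (k : Fin n) : Prop :=
  (∀ j, j < k → σ j < σ k) ∧ ∀ j, k < j → σ k < σ j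

instance (σ : Perm (Fin n)) : DecidablePred σ.IsStrongFixedPoint :=
  fun _ => inferInstanceAs (Decidable (_ ∧ _))

theorem _root_.avoidCount_eq_card_filter (n : ℕ) :
    avoidCount n = #{σ : Perm (Fin n) | ¬ ∃ k, σ.IsStrongFixedPoint k} :=
  rfl

theorem isStrongFixedPoint_iff {σ : Perm (Fin n)} {k : Fin n} :
    σ.IsStrongFixedPoint k ↔ σ k = k ∧ ∀ j, j < k → σ j < k := by
  constructor
  · -- `σ` maps `Iio k` into `Iio (σ k)` and `Ioi k` into `Ioi (σ k)`, so `σ k = k` by counting.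
    rintro ⟨hlt, hgt⟩
    have hle : (k : ℕ) ≤ σ k := by
      simpa using card_le_card_of_injOn σ (s := Iio k) (t := Iio (σ k))
        (fun j hj => by simpa using hlt j (by simpa using hj)) σ.injective.injOn
    have hge : n - 1 - (k : ℕ) ≤ n - 1 - σ k := by
      simpa using card_le_card_of_injOn σ (s := Ioi k) (t := Ioi (σ k))
        (fun j hj => by simpa using hgt j (by simpa using hj)) σ.injective.injOn
    have hfix : σ k = k := Fin.ext (by omega)
    exact ⟨hfix, fun j hj => hfix ▸ hlt j hj⟩
  · rintro ⟨hfix, hlt⟩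
    refine ⟨fun j hj => by rw [hfix]; exact hlt j hj, fun j hj => ?_⟩
    rw [hfix]
    -- `σ` permutes `Iio k`, so nothing above `k` is sent below it.
    by_contra! hle
    have hmap : (Iio k).map σ.toEmbedding = Iio k :=
      map_eq_of_subset fun x hx => by
        obtain ⟨y, hy, rfl⟩ := mem_map.1 hx
        simpa using hlt y (by simpa using hy)
    have hne : σ j ≠ k := fun h => hj.ne (σ.injective (h.trans hfix.symm)).symm
    have hmem : σ j ∈ (Iio k).map σ.toEmbedding := by
      rw [hmap]; exact mem_Iio.2 (lt_of_le_of_ne hle hne)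
    simp only [mem_map_equiv, symm_apply_apply, mem_Iio] at hmem
    exact absurd hj (not_lt.2 hmem.le)

variable {i j : ℕ}

def finSumCongr (τ : Perm (Fin i)) (ρ : Perm (Fin j)) : Perm (Fin (i + j)) :=
  finSumFinEquiv.permCongr (τ.sumCongr ρ)

@[simp]
theorem finSumCongr_castAdd (τ : Perm (Fin i)) (ρ : Perm (Fin j)) (x : Fin i) :
    finSumCongr τ ρ (Fin.castAdd j x) = Fin.castAdd j (τ x) := by
  simp [finSumCongr, permCongr_apply]

@[simp]
theorem finSumCongr_natAdd (τ : Perm (Fin i)) (ρ : Perm (Fin j)) (y : Fin j) :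
    finSumCongr τ ρ (Fin.natAdd i y) = Fin.natAdd i (ρ y) := by
  simp [finSumCongr, permCongr_apply]

theorem finSumCongr_injective :
    Function.Injective fun p : Perm (Fin i) × Perm (Fin j) => finSumCongr p.1 p.2 :=
  finSumFinEquiv.permCongr.injective.comp sumCongrHom_injective

theorem exists_finSumCongr_eq {σ : Perm (Fin (i + j))}
    (h : ∀ x : Fin (i + j), (x : ℕ) < i → (σ x : ℕ) < i) :
    ∃ τ ρ, finSumCongr τ ρ = σ := by
  have hmaps : Set.MapsTo (finSumFinEquiv.symm.permCongr σ) (Set.range Sum.inl)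
      (Set.range Sum.inl) := by
    rintro _ ⟨x, rfl⟩
    refine ⟨⟨σ (Fin.castAdd j x), h _ x.isLt⟩, ?_⟩
    rw [permCongr_apply, symm_symm, eq_comm, symm_apply_eq, finSumFinEquiv_apply_left]
    rfl
  obtain ⟨⟨τ, ρ⟩, hτρ⟩ := mem_sumCongrHom_range_of_perm_mapsTo_inl hmaps
  refine ⟨τ, ρ, ?_⟩
  rw [sumCongrHom_apply] at hτρ
  rw [finSumCongr, hτρ, ← permCongr_symm, apply_symm_apply]

theorem isStrongFixedPoint_finSumCongr_castAdd_iff (τ : Perm (Fin i)) (ρ : Perm (Fin j))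
    (k : Fin i) :
    (finSumCongr τ ρ).IsStrongFixedPoint (Fin.castAdd j k) ↔ τ.IsStrongFixedPoint k := by
  simp only [isStrongFixedPoint_iff, finSumCongr_castAdd, Fin.castAdd_inj]
  refine and_congr_right fun _ => ⟨fun h x hx => ?_, fun h x hx => ?_⟩
  · have := h (Fin.castAdd j x) hx
    rwa [finSumCongr_castAdd] at this
  · obtain ⟨x, rfl⟩ : ∃ x', Fin.castAdd j x' = x :=
      ⟨⟨x, (Fin.lt_def.1 hx).trans k.isLt⟩, rfl⟩
    rw [finSumCongr_castAdd]
    exact h x hx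

theorem isStrongFixedPoint_finSumCongr_natAdd_zero_iff (τ : Perm (Fin i))
    (ρ : Perm (Fin (j + 1))) :
    (finSumCongr τ ρ).IsStrongFixedPoint (Fin.natAdd i 0) ↔ ρ 0 = 0 := by
  rw [isStrongFixedPoint_iff, finSumCongr_natAdd, Fin.natAdd_inj, and_iff_left_iff_imp]
  intro _ x hx
  obtain ⟨x, rfl⟩ : ∃ x', Fin.castAdd (j + 1) x' = x :=
    ⟨⟨x, by simpa [Fin.lt_def] using hx⟩, rfl⟩
  simp [Fin.lt_def]

theorem card_filter_apply_eq_self {α : Type*} [Fintype α] [DecidableEq α] (a : α) :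
    #{σ : Perm α | σ a = a} = (Fintype.card α - 1).factorial := by
  have e : {σ : Perm α // σ a = a} ≃ Perm {x // x ≠ a} :=
    ((Perm.subtypeEquivSubtypePerm (· ≠ a)).trans (subtypeEquivRight (by simp))).symm
  rw [← Fintype.card_subtype, Fintype.card_congr e, Fintype.card_perm]
  simp only [ne_eq, Fintype.card_subtype_compl, Fintype.card_unique]

def firstStrongFixedPoint (σ : Perm (Fin n)) : ℕ :=
  if h : ∃ k, σ.IsStrongFixedPoint k then Fin.find _ h else n

theorem firstStrongFixedPoint_le (σ : Perm (Fin n)) : σ.firstStrongFixedPoint ≤ n := by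
  unfold firstStrongFixedPoint
  split_ifs
  exacts [(Fin.find _ _).isLt.le, le_rfl]

theorem firstStrongFixedPoint_eq_self_iff {σ : Perm (Fin n)} :
    σ.firstStrongFixedPoint = n ↔ ¬ ∃ k, σ.IsStrongFixedPoint k := by
  unfold firstStrongFixedPoint
  split_ifs with h
  · simp only [h, not_true_eq_false, iff_false]
    exact (Fin.find _ h).isLt.ne
  · simp [h]

theorem firstStrongFixedPoint_eq_iff {σ : Perm (Fin n)} {k : Fin n} :
    σ.firstStrongFixedPoint = k ↔
      σ.IsStrongFixedPoint k ∧ ∀ l < k, ¬ σ.IsStrongFixedPoint l := by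
  unfold firstStrongFixedPoint
  split_ifs with h
  · rw [Fin.val_inj, Fin.find_eq_iff]
  · simp only [k.isLt.ne', false_iff, not_and]
    exact fun hk => absurd ⟨k, hk⟩ h

theorem firstStrongFixedPoint_eq_iff_exists {σ : Perm (Fin (i + (j + 1)))} :
    σ.firstStrongFixedPoint = i ↔
      ∃ τ ρ, (¬ ∃ k, τ.IsStrongFixedPoint k) ∧ ρ 0 = 0 ∧ finSumCongr τ ρ = σ := by
  have hbefore : ∀ l : Fin (i + (j + 1)), l < Fin.natAdd i 0 →
      ∃ k, Fin.castAdd (j + 1) k = l :=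
    fun l hl => ⟨⟨l, hl⟩, rfl⟩
  refine (firstStrongFixedPoint_eq_iff (k := Fin.natAdd i 0)).trans ⟨?_, ?_⟩
  · rintro ⟨hσ, hmin⟩
    obtain ⟨-, hlt⟩ := isStrongFixedPoint_iff.1 hσ
    obtain ⟨τ, ρ, rfl⟩ := exists_finSumCongr_eq hlt
    refine ⟨τ, ρ, ?_, (isStrongFixedPoint_finSumCongr_natAdd_zero_iff τ ρ).1 hσ, rfl⟩
    rintro ⟨k, hk⟩
    exact hmin _ (by simp [Fin.lt_def]) ((isStrongFixedPoint_finSumCongr_castAdd_iff τ ρ k).2 hk)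
  · rintro ⟨τ, ρ, hτ, hρ, rfl⟩
    refine ⟨(isStrongFixedPoint_finSumCongr_natAdd_zero_iff τ ρ).2 hρ, fun l hl hsfp => ?_⟩
    obtain ⟨k, rfl⟩ := hbefore l hl
    exact hτ ⟨k, (isStrongFixedPoint_finSumCongr_castAdd_iff τ ρ k).1 hsfp⟩

theorem card_filter_firstStrongFixedPoint_eq (h : i + (j + 1) = n) :
    #{σ : Perm (Fin n) | σ.firstStrongFixedPoint = i} = avoidCount i * j.factorial := by
  subst h
  have hfiber : univ.filter (fun σ : Perm (Fin (i + (j + 1))) => σ.firstStrongFixedPoint = i) =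
      (univ.filter (fun τ : Perm (Fin i) => ¬ ∃ k, τ.IsStrongFixedPoint k) ×ˢ
        univ.filter (fun ρ : Perm (Fin (j + 1)) => ρ 0 = 0)).image
          fun p => finSumCongr p.1 p.2 := by
    ext σ
    simp [firstStrongFixedPoint_eq_iff_exists, and_assoc]
  rw [hfiber, card_image_of_injective _ finSumCongr_injective, card_product,
    card_filter_apply_eq_self, Fintype.card_fin, Nat.add_sub_cancel, avoidCount_eq_card_filter]

theorem card_filter_firstStrongFixedPoint_eq_self :
    #{σ : Perm (Fin n) | σ.firstStrongFixedPoint = n} = avoidCount n := by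
  simp only [firstStrongFixedPoint_eq_self_iff, avoidCount_eq_card_filter]

end Equiv.Perm

theorem avoidCount_recurrence_general (n : ℕ) :
    n.factorial =
      avoidCount n + ∑ i ∈ Finset.range n, avoidCount i * (n - 1 - i).factorial := by
  have hfib := card_eq_sum_card_fiberwise (s := (univ : Finset (Perm (Fin n))))
    (t := range (n + 1)) fun σ _ => mem_range_succ_iff.2 σ.firstStrongFixedPoint_le
  rw [card_univ, Fintype.card_perm, Fintype.card_fin, sum_range_succ,
    Perm.card_filter_firstStrongFixedPoint_eq_self, add_comm] at hfib
  rw [hfib]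
  congr 1
  exact sum_congr rfl fun i hi => Perm.card_filter_firstStrongFixedPoint_eq (by grind)

/-- For all `n ≥ 1`, `n! = a_n + ∑_{i=0}^{n-1} a_i · (n-1-i)!`. -/
theorem avoidCount_recurrence (n : ℕ) (hn : 1 ≤ n) :
    n.factorial =
      avoidCount n + ∑ i ∈ Finset.range n, avoidCount i * (n - 1 - i).factorial :=
  avoidCount_recurrence_general n
end

section
/- For any permutation π of {1,...,n}, the number of pairs (i,j) with i < j such that π_j is a right-to-left maximum, π_i < π_j, and there is no m with i < m < j and π_m > π_j, equals n minus the number of right-to-left maxima of π. -/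
/-- For any permutation `π` of `{1,…,n}`, the number of pairs `(i,j)` with
`i < j` such that `π j` is a right-to-left maximum, `π i < π j`, and no `m` with
`i < m < j` satisfies `π m > π j`, equals `n` minus the number of right-to-left
maxima of `π`. -/
theorem class15_occurrence_count (n : ℕ) (π : Equiv.Perm (Fin n)) :
    (Finset.univ.filter fun p : Fin n × Fin n =>
        p.1 < p.2 ∧ (∀ m : Fin n, p.2 < m → π m < π p.2) ∧ π p.1 < π p.2 ∧
          ¬ ∃ m : Fin n, p.1 < m ∧ m < p.2 ∧ π p.2 < π m).card =
      n - (Finset.univ.filter fun j : Fin n => ∀ m : Fin n, j < m → π m < π j).card := by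
  classical
  have hsplit : (Finset.univ.filter fun j : Fin n => ∀ m : Fin n, j < m → π m < π j).card
      + (Finset.univ.filter fun j : Fin n => ¬ ∀ m : Fin n, j < m → π m < π j).card = n := by
    rw [Finset.card_filter_add_card_filter_not]
    simp
  have hcard : (Finset.univ.filter fun p : Fin n × Fin n =>
        p.1 < p.2 ∧ (∀ m : Fin n, p.2 < m → π m < π p.2) ∧ π p.1 < π p.2 ∧
          ¬ ∃ m : Fin n, p.1 < m ∧ m < p.2 ∧ π p.2 < π m).card =
      (Finset.univ.filter fun j : Fin n => ¬ ∀ m : Fin n, j < m → π m < π j).card := by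
    apply Finset.card_bij (fun p _ => p.1)
    · intro p hp
      simp only [Finset.mem_filter, Finset.mem_univ, true_and] at hp ⊢
      obtain ⟨hlt, hmax, hval, hno⟩ := hp
      intro hall
      exact absurd hval (not_lt.mpr (le_of_lt (hall p.2 hlt)))
    · intro p hp q hq heq
      simp only [Finset.mem_filter, Finset.mem_univ, true_and] at hp hq
      obtain ⟨hlt1, hmax1, hval1, hno1⟩ := hp
      obtain ⟨hlt2, hmax2, hval2, hno2⟩ := hq
      rcases lt_trichotomy p.2 q.2 with h | h | h
      · exact absurd ⟨p.2, heq ▸ hlt1, h, hmax1 q.2 h⟩ hno2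
      · exact Prod.ext heq h
      · exact absurd ⟨q.2, heq ▸ hlt2, h, hmax2 p.2 h⟩ hno1
    · intro i hi
      simp only [Finset.mem_filter, Finset.mem_univ, true_and] at hi
      push_neg at hi
      obtain ⟨m, him, hpm⟩ := hi
      have hne : π i < π m := lt_of_le_of_ne hpm (fun h => (ne_of_lt him) (π.injective h))
      obtain ⟨j, hjmem, hjmax⟩ := Finset.exists_max_image
        (Finset.univ.filter fun k => i < k) (fun k => π k)
        ⟨m, by simp [him]⟩
      simp only [Finset.mem_filter, Finset.mem_univ, true_and] at hjmem
      refine ⟨(i, j), ?_, rfl⟩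
      simp only [Finset.mem_filter, Finset.mem_univ, true_and]
      refine ⟨hjmem, ?_, ?_, ?_⟩
      · intro k hk
        have hle := hjmax k (by simp [lt_trans hjmem hk])
        exact lt_of_le_of_ne hle (fun h => (ne_of_lt hk) (π.injective h).symm)
      · exact lt_of_lt_of_le hne (hjmax m (by simp [him]))
      · rintro ⟨k, hik, hkj, hpk⟩
        exact absurd (hjmax k (by simp [hik])) (not_le.mpr hpk)
  omega
end

section
/- For any permutation π of {1,...,n} with n ≥ 1, the number of pairs (i,j) with i < j such that π_i is a left-to-right maximum, π_j > π_i, and every entry π_m with m > j satisfies π_m < π_i, equals the number of left-to-right maxima of π minus 1. -/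
/-- For any permutation `π` of `{1,…,n}` with `n ≥ 1`, the number of pairs
`(i,j)` with `i < j` such that `π i` is a left-to-right maximum, `π j > π i`,
and every entry `π m` with `m > j` satisfies `π m < π i`, equals the number of
left-to-right maxima of `π` minus 1. -/
theorem class68_occurrence_count (n : ℕ) (hn : 1 ≤ n) (π : Equiv.Perm (Fin n)) :
    (Finset.univ.filter fun p : Fin n × Fin n =>
        p.1 < p.2 ∧ (∀ m : Fin n, m < p.1 → π m < π p.1) ∧ π p.1 < π p.2 ∧
          ∀ m : Fin n, p.2 < m → π m < π p.1).card =
      (Finset.univ.filter fun i : Fin n => ∀ m : Fin n, m < i → π m < π i).card - 1 := by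
  set top : Fin n := ⟨n - 1, by omega⟩ with htopdef
  have htop : ∀ x : Fin n, x ≤ top := fun x => by
    have := x.isLt
    simp only [Fin.le_def, htopdef]
    omega
  set t := π.symm top with ht
  have hπt : π t = top := π.apply_symm_apply top
  set L := Finset.univ.filter fun i : Fin n => ∀ m : Fin n, m < i → π m < π i with hL
  have htL : t ∈ L := by
    simp only [hL, Finset.mem_filter, Finset.mem_univ, true_and]
    intro m hm
    have hne : π m ≠ π t := fun h => absurd (π.injective h) (ne_of_lt hm)
    exact lt_of_le_of_ne (hπt ▸ htop (π m)) hne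
  have key : (Finset.univ.filter fun p : Fin n × Fin n =>
        p.1 < p.2 ∧ (∀ m : Fin n, m < p.1 → π m < π p.1) ∧ π p.1 < π p.2 ∧
          ∀ m : Fin n, p.2 < m → π m < π p.1).card = (L.erase t).card := by
    apply Finset.card_bij (fun p _ => p.1)
    · intro p hp
      simp only [Finset.mem_filter, Finset.mem_univ, true_and] at hp
      obtain ⟨h1, h2, h3, h4⟩ := hp
      refine Finset.mem_erase.mpr ⟨?_, ?_⟩
      · intro heq
        have : π p.2 ≤ π p.1 := heq ▸ hπt ▸ htop (π p.2)
        exact absurd h3 (not_lt.mpr this)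
      · simp only [hL, Finset.mem_filter, Finset.mem_univ, true_and]
        exact h2
    · intro p hp q hq heq
      simp only [Finset.mem_filter, Finset.mem_univ, true_and] at hp hq
      have h2 : p.2 = q.2 := by
        rcases lt_trichotomy p.2 q.2 with h | h | h
        · have := hp.2.2.2 q.2 h
          rw [heq] at this
          exact absurd hq.2.2.1 (not_lt.mpr this.le)
        · exact h
        · have := hq.2.2.2 p.2 h
          rw [← heq] at this
          exact absurd hp.2.2.1 (not_lt.mpr this.le)
      exact Prod.ext heq h2
    · intro i hi
      rw [Finset.mem_erase] at hi
      obtain ⟨hit, hiL⟩ := hi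
      simp only [hL, Finset.mem_filter, Finset.mem_univ, true_and] at hiL
      set F := Finset.univ.filter fun m : Fin n => π i < π m with hF
      have htF : t ∈ F := by
        simp only [hF, Finset.mem_filter, Finset.mem_univ, true_and, hπt]
        exact lt_of_le_of_ne (htop (π i)) (fun h => hit (π.injective (h.trans hπt.symm)))
      have hne : F.Nonempty := ⟨t, htF⟩
      set j := F.max' hne with hj
      have hjF : j ∈ F := F.max'_mem hne
      have hπj : π i < π j := by
        simpa only [hF, Finset.mem_filter, Finset.mem_univ, true_and] using hjF
      have hij : i < j := by
        rcases lt_trichotomy i j with h | h | h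
        · exact h
        · exact absurd hπj (by rw [h]; exact lt_irrefl _)
        · exact absurd (hiL j h) (not_lt.mpr hπj.le)
      refine ⟨(i, j), ?_, rfl⟩
      simp only [Finset.mem_filter, Finset.mem_univ, true_and]
      refine ⟨hij, hiL, hπj, ?_⟩
      intro m hm
      have hmF : m ∉ F := fun hmF => absurd (F.le_max' m hmF) (not_le.mpr hm)
      simp only [hF, Finset.mem_filter, Finset.mem_univ, true_and, not_lt] at hmF
      exact lt_of_le_of_ne hmF (fun h => absurd (π.injective h) (ne_of_gt (hij.trans hm)))
  rw [key, Finset.card_erase_of_mem htL]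
end

section
/- Let s(n,k,ℓ) be the number of permutations of {1,...,n} with exactly ℓ right-to-left maxima and exactly k pairs (i,j), i < j, such that π_j is a right-to-left maximum, π_i < π_j, and every entry strictly between positions i and j is smaller than π_i. Then s(n,k,ℓ) = s(n-1,k,ℓ-1) + ℓ·s(n-1,k-1,ℓ) + (n-1-ℓ)·s(n-1,k,ℓ) for n ≥ 1, with initial conditions s(0,0,0) = 1, s(n,k,0) = 0 for n ≥ 1, and s(0,k,ℓ) = 0 for (k,ℓ) ≠ (0,0). -/
/-!
Every permutation of `Fin (m + 1)` arises exactly once by inserting the new minimal entry `0` at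
some position `p` of a permutation `σ` of `Fin m`. The right-to-left maxima of `σ` survive, and `p`
becomes a new one exactly when it is the last position. The counted pairs of `σ` survive too, and
since `0` is smaller than every other entry, the only possible new pair is `(p, p + 1)`, which is
counted exactly when `p + 1` carries a right-to-left maximum of `σ`. So among the `m + 1` positions,
one adds a right-to-left maximum, `rlMaxCount σ` add a counted pair, and the rest change nothing.
-/

/-- The number of pairs `(i,j)`, `i < j`, such that `π j` is a right-to-left
maximum, `π i < π j`, and every entry strictly between positions `i` and `j`
is smaller than `π i`. -/
def kStat73 {n : ℕ} (π : Equiv.Perm (Fin n)) : ℕ :=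
  (Finset.univ.filter fun p : Fin n × Fin n =>
    p.1 < p.2 ∧ (∀ m : Fin n, p.2 < m → π m < π p.2) ∧ π p.1 < π p.2 ∧
      ∀ m : Fin n, p.1 < m → m < p.2 → π m < π p.1).card

/-- The number of right-to-left maxima of `π`. -/
def rlMaxCount {n : ℕ} (π : Equiv.Perm (Fin n)) : ℕ :=
  (Finset.univ.filter fun j : Fin n => ∀ m : Fin n, j < m → π m < π j).card

/-- `s73 n k ℓ` is the number of permutations of `{1,…,n}` with exactly `ℓ`
right-to-left maxima and exactly `k` counted pairs (indices in `ℤ`, so that the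
value is `0` for negative arguments). -/
def s73 (n : ℕ) (k ℓ : ℤ) : ℕ :=
  (Finset.univ.filter fun π : Equiv.Perm (Fin n) =>
    (kStat73 π : ℤ) = k ∧ (rlMaxCount π : ℤ) = ℓ).card

open Finset

namespace Equiv.Perm

variable {n m : ℕ}

def IsRLMax (π : Perm (Fin n)) (j : Fin n) : Prop :=
  ∀ c, j < c → π c < π j

def IsCountedPair (π : Perm (Fin n)) (i j : Fin n) : Prop :=
  i < j ∧ π.IsRLMax j ∧ π i < π j ∧ ∀ c, i < c → c < j → π c < π i

instance (π : Perm (Fin n)) : DecidablePred π.IsRLMax :=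
  fun _ => by unfold IsRLMax; infer_instance

instance (π : Perm (Fin n)) (i j : Fin n) : Decidable (π.IsCountedPair i j) := by
  unfold IsCountedPair; infer_instance

def insertMin (σ : Perm (Fin m)) (p : Fin (m + 1)) : Perm (Fin (m + 1)) :=
  (finSuccEquiv' p).trans (σ.optionCongr.trans (finSuccEquiv m).symm)

variable (σ : Perm (Fin m)) (p : Fin (m + 1))

@[simp] lemma insertMin_self : σ.insertMin p p = 0 := by
  simp [insertMin, finSuccEquiv_symm_none]

@[simp] lemma insertMin_succAbove (i : Fin m) :
    σ.insertMin p (p.succAbove i) = (σ i).succ := by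
  simp [insertMin, finSuccEquiv_symm_some]

lemma insertMin_injective :
    Function.Injective fun x : Fin (m + 1) × Perm (Fin m) => x.2.insertMin x.1 := by
  rintro ⟨p, σ⟩ ⟨p', σ'⟩ h
  simp only at h
  obtain rfl : p = p' :=
    (σ'.insertMin p').injective <| by rw [← h, insertMin_self, h, insertMin_self]
  obtain rfl : σ = σ' := ext fun i => Fin.succ_injective _ <| by
    rw [← insertMin_succAbove σ p, ← insertMin_succAbove σ' p, h]
  rfl

lemma insertMin_bijective :
    Function.Bijective fun x : Fin (m + 1) × Perm (Fin m) => x.2.insertMin x.1 := by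
  rw [Fintype.bijective_iff_injective_and_card]
  refine ⟨insertMin_injective, ?_⟩
  simp [Fintype.card_perm, Nat.factorial_succ]

lemma isRLMax_insertMin_succAbove (i : Fin m) :
    (σ.insertMin p).IsRLMax (p.succAbove i) ↔ σ.IsRLMax i := by
  simp [IsRLMax, Fin.forall_iff_succAbove p, Fin.succ_pos]

lemma isRLMax_insertMin_self : (σ.insertMin p).IsRLMax p ↔ p = Fin.last m := by
  simp only [IsRLMax, insertMin_self, Fin.not_lt_zero, imp_false, not_lt]
  exact ⟨fun h => Fin.last_le_iff.mp (h _), fun h c => h ▸ Fin.le_last c⟩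

lemma isCountedPair_insertMin_succAbove (i j : Fin m) :
    (σ.insertMin p).IsCountedPair (p.succAbove i) (p.succAbove j) ↔ σ.IsCountedPair i j := by
  simp [IsCountedPair, isRLMax_insertMin_succAbove, Fin.forall_iff_succAbove p, Fin.succ_pos]

lemma not_isCountedPair_insertMin_self_right (a : Fin (m + 1)) :
    ¬ (σ.insertMin p).IsCountedPair a p := by
  simp [IsCountedPair]

lemma isCountedPair_insertMin_castSucc (i : Fin m) (b : Fin (m + 1)) :
    (σ.insertMin i.castSucc).IsCountedPair i.castSucc b ↔ b = i.succ ∧ σ.IsRLMax i := by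
  constructor
  · rintro ⟨hib, hrl, -, hbetween⟩
    -- `0` sits at `i.castSucc`, so nothing may lie strictly between `i.castSucc` and `b`
    obtain rfl : b = i.succ := by
      by_contra hb
      have hsucc : i.succ < b := lt_of_le_of_ne (Fin.castSucc_lt_iff_succ_le.mp hib) (Ne.symm hb)
      simpa using hbetween i.succ Fin.castSucc_lt_succ hsucc
    rw [← Fin.succAbove_castSucc_self, isRLMax_insertMin_succAbove] at hrl
    exact ⟨rfl, hrl⟩
  · rintro ⟨rfl, hrl⟩
    refine ⟨Fin.castSucc_lt_succ, ?_, ?_, fun c h₁ h₂ => ?_⟩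
    · rwa [← Fin.succAbove_castSucc_self, isRLMax_insertMin_succAbove]
    · rw [insertMin_self, ← Fin.succAbove_castSucc_self, insertMin_succAbove]
      exact Fin.succ_pos _
    · exact absurd (Fin.castSucc_lt_iff_succ_le.mp h₁) (not_le.mpr h₂)

lemma not_isCountedPair_insertMin_last (b : Fin (m + 1)) :
    ¬ (σ.insertMin (Fin.last m)).IsCountedPair (Fin.last m) b :=
  fun h => (Fin.le_last b).not_gt h.1

end Equiv.Perm

open Equiv Perm

section

variable {n : ℕ}

lemma rlMaxCount_eq_sum (π : Perm (Fin n)) :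
    rlMaxCount π = ∑ j, if π.IsRLMax j then 1 else 0 := by
  rw [rlMaxCount, card_filter]; rfl

lemma kStat73_eq_sum (π : Perm (Fin n)) :
    kStat73 π = ∑ i, ∑ j, if π.IsCountedPair i j then 1 else 0 := by
  rw [kStat73, card_filter, Fintype.sum_prod_type]; rfl

def statIndicator (π : Perm (Fin n)) (k ℓ : ℤ) : ℤ :=
  if (kStat73 π : ℤ) = k ∧ (rlMaxCount π : ℤ) = ℓ then 1 else 0

lemma s73_eq_sum_statIndicator (k ℓ : ℤ) :
    (s73 n k ℓ : ℤ) = ∑ π : Perm (Fin n), statIndicator π k ℓ := by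
  rw [s73, card_filter]
  push_cast
  rfl

lemma rlMaxCount_mul_statIndicator (π : Perm (Fin n)) (k ℓ : ℤ) :
    rlMaxCount π * statIndicator π k ℓ = ℓ * statIndicator π k ℓ := by
  unfold statIndicator
  split_ifs with h
  · rw [h.2]
  · simp

end

section insertMin

variable {m : ℕ} (σ : Perm (Fin m))

lemma rlMaxCount_insertMin (p : Fin (m + 1)) :
    rlMaxCount (σ.insertMin p) = rlMaxCount σ + if p = Fin.last m then 1 else 0 := by
  simp only [rlMaxCount_eq_sum, Fin.sum_univ_succAbove _ p, isRLMax_insertMin_self,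
    isRLMax_insertMin_succAbove, add_comm]

lemma kStat73_insertMin (p : Fin (m + 1)) :
    kStat73 (σ.insertMin p) =
      kStat73 σ + ∑ b, if (σ.insertMin p).IsCountedPair p b then 1 else 0 := by
  simp only [kStat73_eq_sum, Fin.sum_univ_succAbove _ p, isCountedPair_insertMin_succAbove,
    not_isCountedPair_insertMin_self_right, if_false, zero_add, add_comm]

lemma kStat73_insertMin_castSucc (i : Fin m) :
    kStat73 (σ.insertMin i.castSucc) = kStat73 σ + if σ.IsRLMax i then 1 else 0 := by
  simp only [kStat73_insertMin, isCountedPair_insertMin_castSucc, ite_and, sum_ite_eq',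
    mem_univ, if_true]

lemma kStat73_insertMin_last : kStat73 (σ.insertMin (Fin.last m)) = kStat73 σ := by
  simp [kStat73_insertMin, not_isCountedPair_insertMin_last]

variable (k ℓ : ℤ)

lemma statIndicator_insertMin_last :
    statIndicator (σ.insertMin (Fin.last m)) k ℓ = statIndicator σ k (ℓ - 1) := by
  simp only [statIndicator, kStat73_insertMin_last, rlMaxCount_insertMin, if_pos]
  congr 1
  push_cast
  grind

lemma statIndicator_insertMin_castSucc (i : Fin m) :
    statIndicator (σ.insertMin i.castSucc) k ℓ =
      if σ.IsRLMax i then statIndicator σ (k - 1) ℓ else statIndicator σ k ℓ := by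
  simp only [statIndicator, kStat73_insertMin_castSucc, rlMaxCount_insertMin,
    Fin.castSucc_ne_last, if_false, add_zero]
  split_ifs <;> omega

lemma sum_statIndicator_insertMin :
    ∑ p, statIndicator (σ.insertMin p) k ℓ =
      statIndicator σ k (ℓ - 1) + ℓ * statIndicator σ (k - 1) ℓ +
        (m - ℓ) * statIndicator σ k ℓ := by
  have hcard : #{i | σ.IsRLMax i} = rlMaxCount σ := rfl
  have hcard_not : (#{i | ¬ σ.IsRLMax i} : ℤ) = m - rlMaxCount σ := by
    rw [eq_sub_iff_add_eq, ← hcard, add_comm]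
    exact_mod_cast (card_filter_add_card_filter_not (s := univ) σ.IsRLMax).trans (by simp)
  rw [Fin.sum_univ_castSucc, statIndicator_insertMin_last, add_comm]
  simp only [statIndicator_insertMin_castSucc, sum_ite, sum_const, nsmul_eq_mul, hcard,
    hcard_not, sub_mul, rlMaxCount_mul_statIndicator]
  ring

end insertMin

lemma s73_succ (m : ℕ) (k ℓ : ℤ) :
    (s73 (m + 1) k ℓ : ℤ) =
      s73 m k (ℓ - 1) + ℓ * s73 m (k - 1) ℓ + (m - ℓ) * s73 m k ℓ := by
  simp only [s73_eq_sum_statIndicator, mul_sum, ← sum_add_distrib,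
    ← sum_statIndicator_insertMin]
  rw [← insertMin_bijective.sum_comp, Fintype.sum_prod_type, sum_comm]

lemma s73_zero (k ℓ : ℤ) : s73 0 k ℓ = if k = 0 ∧ ℓ = 0 then 1 else 0 := by
  have hstat (π : Perm (Fin 0)) : kStat73 π = 0 ∧ rlMaxCount π = 0 := by
    simp [kStat73_eq_sum, rlMaxCount_eq_sum]
  simp only [s73, hstat, Nat.cast_zero, filter_const, eq_comm]
  split_ifs <;> rfl

lemma rlMaxCount_pos {m : ℕ} (π : Perm (Fin (m + 1))) : 0 < rlMaxCount π :=
  card_pos.mpr ⟨Fin.last m, by simp [Fin.le_last]⟩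

lemma s73_succ_zero (m : ℕ) (k : ℤ) : s73 (m + 1) k 0 = 0 := by
  simp [s73, (rlMaxCount_pos _).ne']

/-- The recurrence `s(n,k,ℓ) = s(n-1,k,ℓ-1) + ℓ·s(n-1,k-1,ℓ) + (n-1-ℓ)·s(n-1,k,ℓ)`
for `n ≥ 1`, together with the initial conditions `s(0,0,0) = 1`,
`s(n,k,0) = 0` for `n ≥ 1`, and `s(0,k,ℓ) = 0` for `(k,ℓ) ≠ (0,0)`. -/
theorem s73_recurrence :
    (∀ n : ℕ, 1 ≤ n → ∀ k ℓ : ℤ,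
      (s73 n k ℓ : ℤ) =
        (s73 (n - 1) k (ℓ - 1) : ℤ) + ℓ * (s73 (n - 1) (k - 1) ℓ : ℤ) +
          ((n : ℤ) - 1 - ℓ) * (s73 (n - 1) k ℓ : ℤ)) ∧
    s73 0 0 0 = 1 ∧
    (∀ n : ℕ, 1 ≤ n → ∀ k : ℤ, s73 n k 0 = 0) ∧
    (∀ k ℓ : ℤ, (k, ℓ) ≠ (0, 0) → s73 0 k ℓ = 0) := by
  refine ⟨?_, by simp [s73_zero], ?_, fun k ℓ h => by simpa [s73_zero] using h⟩
  · rintro (_ | m) hm k ℓ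
    · omega
    · rw [s73_succ, Nat.add_sub_cancel]
      push_cast
      ring
  · rintro (_ | m) hm k
    · omega
    · exact s73_succ_zero m k
end
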